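/- Let y_1,...,y_k, z_1,...,z_k be i.i.d. uniform on [0,1], m > 0, and G_{k×k} the matrix with entries e^{-2πi m y_j z_l}. Then E[det(G_{k×k} G_{k×k}*)] = (k!)²/m^k · d_k, where d_k = (1/k!) ∫_{[0,1]^k} det({sin(πm(x_j - x_l))/(π(x_j - x_l))}_{j,l}) dx_1···dx_k (diagonal entries equal to m). -/

import Mathlib

open Matrix MeasureTheory

/-- The random `k×k` matrix with entries `g_{jl} = exp(-2πi m y_j z_l)`. -/
noncomputable def losMatrix (k : ℕ) (m : ℝ) (y z : Fin k → ℝ) :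
    Matrix (Fin k) (Fin k) ℂ :=
  fun j l => Complex.exp (-(2 * Real.pi * m * y j * z l) * Complex.I)

/-!
Since `det (G Gᴴ) = conj (det G) * det G` and the `l`-th column of `G` depends on `z_l` alone,
expanding both determinants by Leibniz and integrating over `z` coordinatewise gives Andréief's
identity: the `z`-average is `k!` times the determinant of the Gram matrix
`∫₀¹ conj (g_j t) g_l t dt = e^{iπm(y_j - y_l)} sinc (πm(y_j - y_l))`. The phases form a diagonal
matrix and its inverse, so they drop out of the determinant, and
`sinc (πm(y_j - y_l)) = K_{πm}(y_j, y_l) / m`.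
-/

open Equiv Finset Complex

namespace Matrix

variable {n R : Type*} [Fintype n] [DecidableEq n] [CommRing R]

theorem sum_perm_sign_mul_sign_mul_prod (M : Matrix n n R) (σ : Perm n) :
    ∑ τ : Perm n, ((Perm.sign σ : ℤ) : R) * ((Perm.sign τ : ℤ) : R) * ∏ i, M (σ i) (τ i) =
      det M := by
  rw [← det_transpose, det_apply']
  refine Fintype.sum_equiv (Equiv.mulRight σ⁻¹) _ _ fun τ => ?_
  have hsign : Perm.sign σ * Perm.sign τ = Perm.sign (τ * σ⁻¹) := by
    rw [Perm.sign_mul, Perm.sign_inv, mul_comm]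
  have hprod : ∏ i, M (σ i) (τ i) = ∏ i, M i ((τ * σ⁻¹) i) := by
    rw [← Equiv.prod_comp σ⁻¹]
    simp
  rw [hprod, ← Int.cast_mul, ← Units.val_mul, hsign]
  simp only [coe_mulRight, transpose_apply]

theorem det_of_mul_mul_eq_det {M : Matrix n n R} {u v : n → R} (huv : ∀ i, u i * v i = 1) :
    det (of fun i j => u i * M i j * v j) = det M := by
  calc det (of fun i j => u i * M i j * v j)
      = det (of fun i j => u i * of (fun i j => v j * M i j) i j) := by
        congr 1; ext; simp only [of_apply]; ring
    _ = (∏ i, u i) * ((∏ i, v i) * det M) := by rw [det_mul_column, det_mul_row]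
    _ = det M := by rw [← mul_assoc, ← prod_mul_distrib, Fintype.prod_congr _ _ huv,
        prod_const_one, one_mul]


theorem star_det_mul_det_eq_sum [StarRing R] (A B : Matrix n n R) :
    star (det A) * det B =
      ∑ σ : Perm n, ∑ τ : Perm n, ((Perm.sign σ : ℤ) : R) * ((Perm.sign τ : ℤ) : R) *
        ∏ i, star (A (σ i) i) * B (τ i) i := by
  simp only [det_apply', star_sum, star_mul', star_intCast, star_prod, sum_mul_sum,
    prod_mul_distrib]
  refine sum_congr rfl fun σ _ => sum_congr rfl fun τ _ => by ring

end Matrix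

/-- Andréief's identity. -/
theorem integral_star_det_mul_det_eq_factorial_mul_det {n 𝕜 α : Type*} [Fintype n]
    [DecidableEq n] [RCLike 𝕜]
    [MeasurableSpace α] (μ : Measure α) [SigmaFinite μ]
    (f g : n → α → 𝕜) (hfg : ∀ j l, Integrable (fun t => star (f j t) * g l t) μ) :
    ∫ z, star (det (of fun j i => f j (z i))) * det (of fun j i => g j (z i))
        ∂(Measure.pi fun _ => μ) =
      ((Fintype.card n).factorial : 𝕜) * det (of fun j l => ∫ t, star (f j t) * g l t ∂μ) := by
  have hint : ∀ σ τ : Perm n, Integrable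
      (fun z : n → α => ∏ i, star (f (σ i) (z i)) * g (τ i) (z i)) (Measure.pi fun _ => μ) :=
    fun σ τ => Integrable.fintype_prod fun i => hfg (σ i) (τ i)
  have hfubini : ∀ σ τ : Perm n,
      ∫ z, ∏ i, star (f (σ i) (z i)) * g (τ i) (z i) ∂(Measure.pi fun _ => μ) =
        ∏ i, ∫ t, star (f (σ i) t) * g (τ i) t ∂μ :=
    fun σ τ => integral_fintype_prod_eq_prod fun i t => star (f (σ i) t) * g (τ i) t
  have hgram := sum_perm_sign_mul_sign_mul_prod (of fun j l => ∫ t, star (f j t) * g l t ∂μ)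
  simp only [of_apply] at hgram
  simp only [star_det_mul_det_eq_sum, of_apply]
  rw [integral_finsetSum _ fun σ _ => integrable_finsetSum _ fun τ _ => (hint σ τ).const_mul _]
  simp only [integral_finsetSum _ fun τ _ => (hint _ τ).const_mul _, integral_const_mul,
    hfubini, hgram, sum_const, card_univ, Fintype.card_perm, nsmul_eq_mul]

theorem setIntegral_Icc_cexp_two_mul_I (ω : ℝ) :
    ∫ t in Set.Icc (0 : ℝ) 1, exp (2 * ω * t * I) = exp (ω * I) * Real.sinc ω := by
  rcases eq_or_ne ω 0 with rfl | hω
  · simp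
  have hω' : (ω : ℂ) ≠ 0 := ofReal_ne_zero.mpr hω
  have hc : 2 * ω * I ≠ 0 := by simp [hω, I_ne_zero]
  have hE : exp (ω * I) * exp (-(ω * I)) = 1 := by rw [← exp_add, add_neg_cancel, exp_zero]
  have hsq : exp (2 * ω * I) = exp (ω * I) ^ 2 := by rw [← exp_nat_mul]; ring_nf
  rw [MeasureTheory.integral_Icc_eq_integral_Ioc, ← intervalIntegral.integral_of_le zero_le_one]
  simp_rw [show ∀ t : ℝ, 2 * ω * t * I = 2 * ω * I * t by intro t; ring]
  rw [integral_exp_mul_complex hc, Real.sinc_of_ne_zero hω]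
  push_cast
  rw [mul_one, mul_zero, exp_zero, hsq, sin]
  field_simp
  linear_combination hE - exp (ω * I) * (exp (-(ω * I)) - exp (ω * I)) * I_sq

theorem Real.volume_restrict_Icc_pi {ι : Type*} [Fintype ι] (a b : ι → ℝ) :
    volume.restrict (Set.Icc a b) = Measure.pi fun i => volume.restrict (Set.Icc (a i) (b i)) := by
  rw [← Set.pi_univ_Icc, volume_pi, Measure.restrict_pi_pi]

theorem integral_det_losMatrix_mul_conjTranspose (k : ℕ) (m : ℝ) (y : Fin k → ℝ) :
    ∫ z in Set.Icc (0 : Fin k → ℝ) 1, (losMatrix k m y z * (losMatrix k m y z)ᴴ).det =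
      k.factorial * det (of fun j l => (Real.sinc (Real.pi * m * (y j - y l)) : ℂ)) := by
  set f : Fin k → ℝ → ℂ := fun j t => exp (-(2 * Real.pi * m * y j * t) * I)
  have hdet : ∀ z, (losMatrix k m y z * (losMatrix k m y z)ᴴ).det =
      star (det (of fun j i => f j (z i))) * det (of fun j i => f j (z i)) := fun z => by
    rw [det_mul, det_conjTranspose, mul_comm]; rfl
  have hint : ∀ j l, IntegrableOn (fun t => star (f j t) * f l t) (Set.Icc 0 1) := fun j l =>
    Continuous.integrableOn_Icc (by fun_prop)
  have hgram : ∀ j l, ∫ t in Set.Icc (0 : ℝ) 1, star (f j t) * f l t =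
      exp ((Real.pi * m * y j : ℝ) * I) * Real.sinc (Real.pi * m * (y j - y l)) *
        exp (-(Real.pi * m * y l : ℝ) * I) := fun j l => by
    have hphase : ∀ t : ℝ,
        star (f j t) * f l t = exp (2 * (Real.pi * m * (y j - y l) : ℝ) * t * I) :=
      fun t => by
        simp only [f, RCLike.star_def, ← exp_conj, ← exp_add, map_mul, map_neg, conj_I, conj_ofReal,
          map_ofNat]
        push_cast; ring_nf
    simp_rw [hphase, setIntegral_Icc_cexp_two_mul_I]
    rw [mul_right_comm (exp _) (ofReal _) (exp _), ← exp_add]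
    congr 3
    push_cast; ring
  simp only [hdet, Real.volume_restrict_Icc_pi, Pi.zero_apply, Pi.one_apply]
  rw [integral_star_det_mul_det_eq_factorial_mul_det _ f f hint]
  simp_rw [hgram, Fintype.card_fin]
  exact congrArg _ (det_of_mul_mul_eq_det fun j => by
    rw [← exp_add, neg_mul, add_neg_cancel, exp_zero])

theorem ite_sin_div_eq_mul_sinc (m a b : ℝ) :
    (if a = b then (m : ℂ) else
      ((Real.sin (Real.pi * m * (a - b)) / (Real.pi * (a - b)) : ℝ) : ℂ)) =
      m * Real.sinc (Real.pi * m * (a - b)) := by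
  split_ifs with hab
  · simp [hab]
  have hab' : a - b ≠ 0 := sub_ne_zero.mpr hab
  rcases eq_or_ne m 0 with rfl | hm
  · simp
  rw [← ofReal_mul, Real.sinc_of_ne_zero (by positivity)]
  congr 1
  field_simp

theorem det_ite_sin_div_eq_pow_mul_det_sinc {n : Type*} [Fintype n] [DecidableEq n] (m : ℝ)
    (x : n → ℝ) :
    det (fun j l : n => if x j = x l then (m : ℂ) else
        ((Real.sin (Real.pi * m * (x j - x l)) / (Real.pi * (x j - x l)) : ℝ) : ℂ)) =
      m ^ Fintype.card n * det (of fun j l => (Real.sinc (Real.pi * m * (x j - x l)) : ℂ)) := by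
  rw [← det_smul]
  congr 1
  ext j l
  exact ite_sin_div_eq_mul_sinc m (x j) (x l)

/-- `E[det(G_{k×k}G_{k×k}*)] = (k!)²/m^k · d_k`, where `d_k` is the `k`-th Fredholm
coefficient of the sinc kernel `sin(πm(x-y))/(π(x-y))` (diagonal value `m`). -/
theorem expected_det_eq_fredholm_coeff (k : ℕ) (m : ℝ) (hm : 0 < m) :
    (∫ y in Set.Icc (0 : Fin k → ℝ) 1, ∫ z in Set.Icc (0 : Fin k → ℝ) 1,
        (losMatrix k m y z * (losMatrix k m y z)ᴴ).det)
      =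
    ((k.factorial : ℂ) ^ 2 / (m : ℂ) ^ k) *
      ((1 / (k.factorial : ℂ)) *
        ∫ x in Set.Icc (0 : Fin k → ℝ) 1,
          Matrix.det (fun j l : Fin k =>
            if x j = x l then (m : ℂ) else
              ((Real.sin (Real.pi * m * (x j - x l)) / (Real.pi * (x j - x l)) : ℝ) : ℂ))) := by
  simp_rw [integral_det_losMatrix_mul_conjTranspose, det_ite_sin_div_eq_pow_mul_det_sinc,
    Fintype.card_fin, integral_const_mul]
  have hk : (k.factorial : ℂ) ≠ 0 := Nat.cast_ne_zero.mpr k.factorial_ne_zero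
  have hm' : (m : ℂ) ≠ 0 := ofReal_ne_zero.mpr hm.ne'
  field_simp
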